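/- arXiv:2506.12534 — 2 statements merged into one kernel-verified Lean document; each statement's English description precedes it below -/
import Mathlib

section
/- Let E = EuclideanSpace ℝ (Fin n), μ a Borel probability measure on E satisfying the standing integrability assumption, and u ∈ E with ‖u‖ < 1. Let Q ⊆ E be the u-quantile set of μ, let (X_i)_{i∈ℕ} be i.i.d. with law μ on (Ω, P), and fix ε > 0. Then for P-almost every ω there exists N₁(ω) < ∞ such that for all N ≥ N₁(ω), every minimizer p of the empirical loss p ↦ (1/N) ∑_{i=0}^{N−1} ρ_u(X_i(ω), p) satisfies infDist(p, Q) < ε; i.e., the sample u-quantile set of (X_0(ω), …, X_{N−1}(ω)) is contained in {p : infDist(p, Q) < ε}. (Euclidean case of Theorem 4.1(a).) -/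
/-!
The population risk `G(p) = ∫ ρ_u(x, p) dμ(x)` and the empirical risks `F_N` are all
`(1 + ‖u‖)`-Lipschitz in `p`, and both are bounded below by `(1 - ‖u‖)(‖p‖ - mean ‖x‖)`.
By the strong law of large numbers, almost surely `F_N → G` at every point of a countable dense
set and the sample means of `‖X_i‖` converge; equicontinuity upgrades the first to uniform
convergence on compact sets, and the second confines the minimizers of `F_N` to a fixed ball.
On the compact part of that ball at distance `≥ ε` from the quantile set, `G` exceeds its minimum
by some `δ > 0`, so once `F_N` is `δ/2`-close to `G` on the ball no minimizer of `F_N` lies there.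
-/

open MeasureTheory Filter Topology

/-- The data-based geometric quantile loss in Euclidean space:
`ρ_u(x,p) = ‖p − x‖ − ⟪u, p − x⟫`. -/
noncomputable def quantileLoss {n : ℕ} (u x p : EuclideanSpace ℝ (Fin n)) : ℝ :=
  ‖p - x‖ - inner ℝ u (p - x)

open scoped NNReal

theorem Equicontinuous.tendstoUniformlyOn_of_tendsto_of_dense {ι X α : Type*}
    [TopologicalSpace X] [UniformSpace α] {l : Filter ι} {F : ι → X → α} {f : X → α}
    {s : Set X} (hF : Equicontinuous F) (hf : Continuous f) (hs : Dense s)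
    (hFs : ∀ x ∈ s, Tendsto (F · x) l (𝓝 (f x))) {K : Set X} (hK : IsCompact K) :
    TendstoUniformlyOn F f l K := by
  have hF_tendsto : ∀ x, Tendsto (F · x) l (𝓝 (f x)) := fun x =>
    (hF.isClosed_setOfPred_tendsto hf).closure_subset_iff.2 hFs (hs.closure_eq ▸ trivial)
  have hK_unif := (EquicontinuousOn.tendsto_uniformOnFun_iff_pi' (𝔖 := {K})
    (by simpa using hK) (by simpa using hF.equicontinuousOn K) l f).2
    (tendsto_pi_nhds.2 fun x => hF_tendsto x)
  exact UniformOnFun.tendsto_iff_tendstoUniformlyOn.1 hK_unif K rfl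

theorem TendstoUniformlyOn.eventually_infDist_argmin_lt {ι X : Type*} [PseudoMetricSpace X]
    {l : Filter ι} {F : ι → X → ℝ} {f : X → ℝ} {K : Set X} (hFf : TendstoUniformlyOn F f l K)
    (hK : IsCompact K) (hf : ContinuousOn f K) {q : X} (hqK : q ∈ K) (hq : ∀ p, f q ≤ f p)
    (hminK : ∀ᶠ i in l, ∀ p, (∀ p', F i p ≤ F i p') → p ∈ K) {ε : ℝ} (hε : 0 < ε) :
    ∀ᶠ i in l, ∀ p, (∀ p', F i p ≤ F i p') →
      Metric.infDist p {q | ∀ p, f q ≤ f p} < ε := by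
  set Q := {q | ∀ p, f q ≤ f p}
  set Kfar := K ∩ {p | ε ≤ Metric.infDist p Q}
  have hKfar : IsCompact Kfar :=
    hK.inter_right (isClosed_le continuous_const (Metric.continuous_infDist_pt Q))
  obtain ⟨a, hqa, ha⟩ : ∃ a, f q < a ∧ ∀ p ∈ Kfar, a ≤ f p := by
    refine hKfar.exists_forall_le' (hf.mono Set.inter_subset_left) fun p hp => ?_
    by_contra! hpq
    have hpQ : p ∈ Q := fun p' => hpq.trans (hq p')
    have hfar : ε ≤ Metric.infDist p Q := hp.2
    rw [Metric.infDist_zero_of_mem hpQ] at hfar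
    linarith
  filter_upwards [hminK, Metric.tendstoUniformlyOn_iff.1 hFf ((a - f q) / 2) (by linarith)]
    with i hiK hiclose p hp
  by_contra! hfar
  have hpK := hiK p hp
  have hp_close := abs_lt.1 (Real.dist_eq _ _ ▸ hiclose p hpK)
  have hq_close := abs_lt.1 (Real.dist_eq _ _ ▸ hiclose q hqK)
  linarith [hp q, ha p ⟨hpK, hfar⟩]

theorem LipschitzWith.integral {α X : Type*} [MeasurableSpace α] [PseudoMetricSpace X]
    {μ : Measure α} [IsProbabilityMeasure μ] {f : α → X → ℝ} {K : ℝ≥0}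
    (hf : ∀ a, LipschitzWith K (f a)) (hint : ∀ p, Integrable (fun a => f a p) μ) :
    LipschitzWith K fun p => ∫ a, f a p ∂μ := by
  refine LipschitzWith.of_dist_le_mul fun p q => ?_
  rw [dist_eq_norm, ← integral_sub (hint p) (hint q)]
  have hbound : ∀ a, ‖f a p - f a q‖ ≤ K * dist p q := fun a => by
    simpa [dist_eq_norm] using (hf a).dist_le_mul p q
  simpa using norm_integral_le_of_norm_le_const (μ := μ) (Eventually.of_forall hbound)

theorem LipschitzWith.average_range {X : Type*} [PseudoMetricSpace X] {f : ℕ → X → ℝ}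
    {K : ℝ≥0} (hf : ∀ i, LipschitzWith K (f i)) (N : ℕ) :
    LipschitzWith K fun p => (N : ℝ)⁻¹ * ∑ i ∈ Finset.range N, f i p := by
  refine LipschitzWith.of_dist_le_mul fun p q => ?_
  rw [Real.dist_eq, ← mul_sub, ← Finset.sum_sub_distrib, abs_mul, abs_inv, Nat.abs_cast]
  calc (N : ℝ)⁻¹ * |∑ i ∈ Finset.range N, (f i p - f i q)|
      ≤ (N : ℝ)⁻¹ * ∑ _i ∈ Finset.range N, K * dist p q := by
        gcongr
        exact (Finset.abs_sum_le_sum_abs _ _).trans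
          (Finset.sum_le_sum fun i _ => by simpa [Real.dist_eq] using (hf i).dist_le_mul p q)
    _ = ((N : ℝ)⁻¹ * N) * (K * dist p q) := by simp [mul_assoc]
    _ ≤ K * dist p q := by
        apply mul_le_of_le_one_left (by positivity)
        rcases N.eq_zero_or_pos with rfl | hN
        · simp
        · rw [inv_mul_cancel₀ (by positivity)]

theorem strong_law_ae_comp {Ω α : Type*} [MeasurableSpace Ω] [MeasurableSpace α]
    {P : Measure Ω} {μ : Measure α} {X : ℕ → Ω → α} (hXmeas : ∀ i, Measurable (X i))
    (hXindep : ProbabilityTheory.iIndepFun X P) (hXlaw : ∀ i, P.map (X i) = μ) {g : α → ℝ}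
    (hg : Measurable g) (hgint : Integrable g μ) :
    ∀ᵐ ω ∂P, Tendsto (fun N : ℕ => (N : ℝ)⁻¹ * ∑ i ∈ Finset.range N, g (X i ω))
      atTop (𝓝 (∫ x, g x ∂μ)) := by
  have hint : Integrable (fun ω => g (X 0 ω)) P :=
    (integrable_map_measure hg.aestronglyMeasurable (hXmeas 0).aemeasurable).1
      (hXlaw 0 ▸ hgint)
  have hident : ∀ i, ProbabilityTheory.IdentDistrib (fun ω => g (X i ω)) (fun ω => g (X 0 ω)) P P :=
    fun i => ProbabilityTheory.IdentDistrib.comp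
      ⟨(hXmeas i).aemeasurable, (hXmeas 0).aemeasurable, by rw [hXlaw i, hXlaw 0]⟩ hg
  have hmean : ∫ ω, g (X 0 ω) ∂P = ∫ x, g x ∂μ := by
    rw [← hXlaw 0, integral_map (hXmeas 0).aemeasurable hg.aestronglyMeasurable]
  filter_upwards [ProbabilityTheory.strong_law_ae_real (fun i ω => g (X i ω)) hint
    (fun i j hij => (hXindep.indepFun hij).comp hg hg) hident] with ω hω
  simpa only [inv_mul_eq_div, hmean] using hω

section Quantile

variable {n : ℕ}
local notation "E" => EuclideanSpace ℝ (Fin n)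

theorem one_sub_norm_mul_le_quantileLoss (u x p : E) :
    (1 - ‖u‖) * ‖p - x‖ ≤ quantileLoss u x p := by
  have := real_inner_le_norm u (p - x)
  unfold quantileLoss
  linarith

theorem abs_quantileLoss_le (u x p : E) : |quantileLoss u x p| ≤ (1 + ‖u‖) * ‖p - x‖ := by
  have := abs_real_inner_le_norm u (p - x)
  unfold quantileLoss
  calc _ ≤ |‖p - x‖| + |inner ℝ u (p - x)| := abs_sub _ _
    _ ≤ _ := by rw [abs_norm]; linarith

theorem lipschitzWith_quantileLoss (u x : E) : LipschitzWith (1 + ‖u‖₊) (quantileLoss u x) := by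
  have hshift : LipschitzWith 1 fun p : E => p - x := by
    simpa using LipschitzWith.id.sub (LipschitzWith.const x)
  have hinner : LipschitzWith ‖u‖₊ fun p : E => inner ℝ u (p - x) := by
    have hnorm : ‖innerSL ℝ u‖₊ = ‖u‖₊ := NNReal.eq (innerSL_apply_norm ℝ u)
    have := (innerSL ℝ u).lipschitz.comp hshift
    rwa [hnorm, mul_one] at this
  have := (lipschitzWith_one_norm.comp hshift).sub hinner
  rwa [one_mul] at this

theorem continuous_quantileLoss (u p : E) : Continuous fun x : E => quantileLoss u x p := by
  unfold quantileLoss; fun_prop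

theorem one_sub_norm_mul_sub_le_quantileLoss {u : E} (hu : ‖u‖ ≤ 1) (x p : E) :
    (1 - ‖u‖) * (‖p‖ - ‖x‖) ≤ quantileLoss u x p :=
  (mul_le_mul_of_nonneg_left (norm_sub_norm_le p x) (by linarith)).trans
    (one_sub_norm_mul_le_quantileLoss u x p)

theorem integrable_norm_of_integrable_quantileLoss {μ : Measure E} [IsFiniteMeasure μ]
    {u₀ p₀ : E} (hu₀ : ‖u₀‖ < 1) (h : Integrable (fun x => quantileLoss u₀ x p₀) μ) :
    Integrable (‖·‖) μ := by
  have hc : 0 < 1 - ‖u₀‖ := sub_pos.2 hu₀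
  refine ((integrable_const ‖p₀‖).add (h.const_mul (1 - ‖u₀‖)⁻¹)).mono'
    continuous_norm.aestronglyMeasurable (Eventually.of_forall fun x => ?_)
  have hdist : ‖p₀ - x‖ ≤ (1 - ‖u₀‖)⁻¹ * quantileLoss u₀ x p₀ :=
    (le_inv_mul_iff₀ hc).2 (one_sub_norm_mul_le_quantileLoss u₀ x p₀)
  rw [norm_norm, Pi.add_apply]
  linarith [norm_le_norm_add_norm_sub p₀ x]

theorem integrable_quantileLoss {μ : Measure E} [IsFiniteMeasure μ] (hμ : Integrable (‖·‖) μ)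
    (u p : E) : Integrable (fun x => quantileLoss u x p) μ := by
  refine (((integrable_const ‖p‖).add hμ).const_mul (1 + ‖u‖)).mono'
    (continuous_quantileLoss u p).aestronglyMeasurable (Eventually.of_forall fun x => ?_)
  rw [Real.norm_eq_abs]
  exact (abs_quantileLoss_le u x p).trans (by gcongr; exact norm_sub_le p x)

noncomputable def quantileRisk (μ : Measure E) (u p : E) : ℝ :=
  ∫ x, quantileLoss u x p ∂μ

noncomputable def empiricalQuantileRisk (u : E) (x : ℕ → E) (N : ℕ) (p : E) : ℝ :=
  (N : ℝ)⁻¹ * ∑ i ∈ Finset.range N, quantileLoss u (x i) p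

section quantileRisk

variable {μ : Measure (EuclideanSpace ℝ (Fin n))} [IsProbabilityMeasure μ]

theorem lipschitzWith_quantileRisk (hμ : Integrable (‖·‖) μ) (u : E) :
    LipschitzWith (1 + ‖u‖₊) (quantileRisk μ u) :=
  LipschitzWith.integral (fun x => lipschitzWith_quantileLoss u x) (integrable_quantileLoss hμ u)

theorem one_sub_norm_mul_sub_integral_le_quantileRisk (hμ : Integrable (‖·‖) μ) {u : E}
    (hu : ‖u‖ ≤ 1) (p : E) :
    (1 - ‖u‖) * (‖p‖ - ∫ x, ‖x‖ ∂μ) ≤ quantileRisk μ u p := by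
  calc (1 - ‖u‖) * (‖p‖ - ∫ x, ‖x‖ ∂μ) = ∫ x, (1 - ‖u‖) * (‖p‖ - ‖x‖) ∂μ := by
        rw [integral_const_mul, integral_sub (integrable_const _) hμ, integral_const]
        simp
    _ ≤ quantileRisk μ u p :=
        integral_mono ((integrable_const _).sub hμ |>.const_mul _)
          (integrable_quantileLoss hμ u p) (one_sub_norm_mul_sub_le_quantileLoss hu · p)

theorem exists_forall_quantileRisk_le (hμ : Integrable (‖·‖) μ) {u : E} (hu : ‖u‖ < 1) :
    ∃ q, ∀ p, quantileRisk μ u q ≤ quantileRisk μ u p := by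
  have hcoercive : Tendsto (fun p : E => (1 - ‖u‖) * (‖p‖ - ∫ x, ‖x‖ ∂μ)) (cocompact E) atTop :=
    (tendsto_atTop_add_const_right _ _ tendsto_norm_cocompact_atTop).const_mul_atTop
      (sub_pos.2 hu)
  exact (lipschitzWith_quantileRisk hμ u).continuous.exists_forall_le
    (tendsto_atTop_mono (one_sub_norm_mul_sub_integral_le_quantileRisk hμ hu.le) hcoercive)

end quantileRisk

theorem lipschitzWith_empiricalQuantileRisk (u : E) (x : ℕ → E) (N : ℕ) :
    LipschitzWith (1 + ‖u‖₊) (empiricalQuantileRisk u x N) :=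
  LipschitzWith.average_range (fun i => lipschitzWith_quantileLoss u (x i)) N

theorem one_sub_norm_mul_sub_average_le_empiricalQuantileRisk {u : E} (hu : ‖u‖ ≤ 1)
    (x : ℕ → E) {N : ℕ} (hN : N ≠ 0) (p : E) :
    (1 - ‖u‖) * (‖p‖ - (N : ℝ)⁻¹ * ∑ i ∈ Finset.range N, ‖x i‖)
      ≤ empiricalQuantileRisk u x N p := by
  calc (1 - ‖u‖) * (‖p‖ - (N : ℝ)⁻¹ * ∑ i ∈ Finset.range N, ‖x i‖)
      = (N : ℝ)⁻¹ * ∑ i ∈ Finset.range N, (1 - ‖u‖) * (‖p‖ - ‖x i‖) := by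
        rw [← Finset.mul_sum, Finset.sum_sub_distrib, Finset.sum_const, Finset.card_range,
          nsmul_eq_mul]
        field_simp
    _ ≤ empiricalQuantileRisk u x N p := by
        unfold empiricalQuantileRisk
        gcongr with i
        exact one_sub_norm_mul_sub_le_quantileLoss hu (x i) p

theorem eventually_infDist_quantileSet_lt {μ : Measure E} [IsProbabilityMeasure μ]
    (hμ : Integrable (‖·‖) μ) {u : E} (hu : ‖u‖ < 1) {x : ℕ → E} {s : Set E} (hs : Dense s)
    (hnorm : Tendsto (fun N : ℕ => (N : ℝ)⁻¹ * ∑ i ∈ Finset.range N, ‖x i‖) atTop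
      (𝓝 (∫ y, ‖y‖ ∂μ)))
    (hrisk : ∀ p ∈ s, Tendsto (empiricalQuantileRisk u x · p) atTop (𝓝 (quantileRisk μ u p)))
    {ε : ℝ} (hε : 0 < ε) :
    ∀ᶠ N in atTop, ∀ p, (∀ p', empiricalQuantileRisk u x N p ≤ empiricalQuantileRisk u x N p') →
      Metric.infDist p {q | ∀ p, quantileRisk μ u q ≤ quantileRisk μ u p} < ε := by
  have hc : 0 < 1 - ‖u‖ := sub_pos.2 hu
  obtain ⟨q, hq⟩ := exists_forall_quantileRisk_le hμ hu
  set R := (quantileRisk μ u q + 1) / (1 - ‖u‖) + ∫ y, ‖y‖ ∂μ + 1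
  have hunif : TendstoUniformlyOn (empiricalQuantileRisk u x) (quantileRisk μ u) atTop
      (Metric.closedBall 0 R) :=
    (LipschitzWith.uniformEquicontinuous _ _ (lipschitzWith_empiricalQuantileRisk u x)
      ).equicontinuous.tendstoUniformlyOn_of_tendsto_of_dense
      (lipschitzWith_quantileRisk hμ u).continuous hs hrisk (isCompact_closedBall 0 R)
  have hqR : q ∈ Metric.closedBall 0 R := by
    have hq_norm : ‖q‖ - ∫ y, ‖y‖ ∂μ ≤ (quantileRisk μ u q + 1) / (1 - ‖u‖) :=
      (le_div_iff₀' hc).2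
        (by linarith [one_sub_norm_mul_sub_integral_le_quantileRisk hμ hu.le q])
    rw [mem_closedBall_zero_iff]
    linarith
  have hmin_bounded : ∀ᶠ N in atTop, ∀ p,
      (∀ p', empiricalQuantileRisk u x N p ≤ empiricalQuantileRisk u x N p') →
        p ∈ Metric.closedBall 0 R := by
    filter_upwards [eventually_ne_atTop 0, hnorm.eventually (gt_mem_nhds (lt_add_one _)),
      (hunif.tendsto_at hqR).eventually (gt_mem_nhds (lt_add_one _))]
      with N hN hN_norm hN_q p hp
    have hp_norm : ‖p‖ - (N : ℝ)⁻¹ * ∑ i ∈ Finset.range N, ‖x i‖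
        ≤ (quantileRisk μ u q + 1) / (1 - ‖u‖) :=
      (le_div_iff₀' hc).2 (by
        linarith [one_sub_norm_mul_sub_average_le_empiricalQuantileRisk hu.le x hN p, hp q])
    rw [mem_closedBall_zero_iff]
    linarith
  exact hunif.eventually_infDist_argmin_lt (isCompact_closedBall 0 R)
    (lipschitzWith_quantileRisk hμ u).continuous.continuousOn hqR hq hmin_bounded hε

end Quantile

theorem sample_quantiles_eventually_near_population_quantiles_general
    {n : ℕ} (μ : Measure (EuclideanSpace ℝ (Fin n))) [IsProbabilityMeasure μ]
    (hμint : ∃ (u₀ p₀ : EuclideanSpace ℝ (Fin n)), ‖u₀‖ < 1 ∧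
      Integrable (fun x => quantileLoss u₀ x p₀) μ)
    (u : EuclideanSpace ℝ (Fin n)) (hu : ‖u‖ < 1)
    (Q : Set (EuclideanSpace ℝ (Fin n)))
    (hQ : Q = {q : EuclideanSpace ℝ (Fin n) | ∀ p, ∫ x, quantileLoss u x q ∂μ
        ≤ ∫ x, quantileLoss u x p ∂μ})
    {Ω : Type*} [MeasurableSpace Ω] (P : Measure Ω)
    (X : ℕ → Ω → EuclideanSpace ℝ (Fin n))
    (hXmeas : ∀ i, Measurable (X i))
    (hXindep : ProbabilityTheory.iIndepFun X P)
    (hXlaw : ∀ i, P.map (X i) = μ)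
    (ε : ℝ) (hε : 0 < ε) :
    ∀ᵐ ω ∂P, ∃ N₁ : ℕ, ∀ N ≥ N₁,
      ∀ p : EuclideanSpace ℝ (Fin n),
        (∀ p' : EuclideanSpace ℝ (Fin n),
          (N : ℝ)⁻¹ * ∑ i ∈ Finset.range N, quantileLoss u (X i ω) p
            ≤ (N : ℝ)⁻¹ * ∑ i ∈ Finset.range N, quantileLoss u (X i ω) p') →
        Metric.infDist p Q < ε := by
  subst hQ
  obtain ⟨u₀, p₀, hu₀, hint₀⟩ := hμint
  have hμ := integrable_norm_of_integrable_quantileLoss hu₀ hint₀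
  obtain ⟨s, hs⟩ := TopologicalSpace.exists_dense_seq (EuclideanSpace ℝ (Fin n))
  have hrisk : ∀ᵐ ω ∂P, ∀ k, Tendsto (empiricalQuantileRisk u (X · ω) · (s k)) atTop
      (𝓝 (quantileRisk μ u (s k))) :=
    ae_all_iff.2 fun k => strong_law_ae_comp hXmeas hXindep hXlaw
      (continuous_quantileLoss u (s k)).measurable (integrable_quantileLoss hμ u (s k))
  filter_upwards [strong_law_ae_comp hXmeas hXindep hXlaw measurable_norm hμ, hrisk]
    with ω hω_norm hω_risk
  exact eventually_atTop.1 (eventually_infDist_quantileSet_lt hμ hu hs hω_norm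
    (Set.forall_mem_range.2 hω_risk) hε)

/-- Euclidean case of Theorem 4.1(a): almost surely, the sample `u`-quantile set is
eventually contained in any `ε`-neighbourhood of the population `u`-quantile set. -/
theorem sample_quantiles_eventually_near_population_quantiles
    {n : ℕ} (μ : Measure (EuclideanSpace ℝ (Fin n))) [IsProbabilityMeasure μ]
    (hμint : ∃ (u₀ p₀ : EuclideanSpace ℝ (Fin n)), ‖u₀‖ < 1 ∧
      Integrable (fun x => quantileLoss u₀ x p₀) μ)
    (u : EuclideanSpace ℝ (Fin n)) (hu : ‖u‖ < 1)
    (Q : Set (EuclideanSpace ℝ (Fin n)))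
    (hQ : Q = {q : EuclideanSpace ℝ (Fin n) | ∀ p, ∫ x, quantileLoss u x q ∂μ
        ≤ ∫ x, quantileLoss u x p ∂μ})
    {Ω : Type*} [MeasurableSpace Ω] (P : Measure Ω) [IsProbabilityMeasure P]
    (X : ℕ → Ω → EuclideanSpace ℝ (Fin n))
    (hXmeas : ∀ i, Measurable (X i))
    (hXindep : ProbabilityTheory.iIndepFun X P)
    (hXlaw : ∀ i, P.map (X i) = μ)
    (ε : ℝ) (hε : 0 < ε) :
    ∀ᵐ ω ∂P, ∃ N₁ : ℕ, ∀ N ≥ N₁,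
      ∀ p : EuclideanSpace ℝ (Fin n),
        (∀ p' : EuclideanSpace ℝ (Fin n),
          (N : ℝ)⁻¹ * ∑ i ∈ Finset.range N, quantileLoss u (X i ω) p
            ≤ (N : ℝ)⁻¹ * ∑ i ∈ Finset.range N, quantileLoss u (X i ω) p') →
        Metric.infDist p Q < ε :=
  sample_quantiles_eventually_near_population_quantiles_general μ hμint u hu Q hQ P X hXmeas hXindep
    hXlaw ε hε
end

section
/- Let E = EuclideanSpace ℝ (Fin n), N ≥ 1, x : Fin N → E a sample, u ∈ E with β := ‖u‖ < 1, and y ∈ E. Then every minimizer q of the empirical loss p ↦ (1/N) ∑_i ρ_u(x_i, p) satisfies ‖q − y‖ ≤ ((1 + β)/(1 − β)) · (1/N) ∑_i ‖x_i − y‖ + max_i ‖x_i − y‖. (Euclidean case of the sample-quantile localization bound established in the proof of Theorem 5.2: all sample u-quantiles lie in an explicit ball determined by the data.) -/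
open Finset

section Averages

variable {ι : Type*} [Fintype ι] [Nonempty ι]

lemma inv_card_mul_sum_le_ciSup (f : ι → ℝ) :
    (Fintype.card ι : ℝ)⁻¹ * ∑ i, f i ≤ ⨆ i, f i := by
  have hcard : (0 : ℝ) < Fintype.card ι := by exact_mod_cast Fintype.card_pos
  rw [inv_mul_le_iff₀ hcard]
  simpa using sum_le_card_nsmul univ f _ fun i _ => le_ciSup (Finite.bddAbove_range f) i

lemma norm_sub_le_inv_card_mul_sum_add {E : Type*} [SeminormedAddCommGroup E]
    (x : ι → E) (q y : E) :
    ‖q - y‖ ≤ (Fintype.card ι : ℝ)⁻¹ * ∑ i, ‖q - x i‖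
      + (Fintype.card ι : ℝ)⁻¹ * ∑ i, ‖x i - y‖ := by
  have hcard : (0 : ℝ) < Fintype.card ι := by exact_mod_cast Fintype.card_pos
  rw [← mul_add, ← sum_add_distrib, le_inv_mul_iff₀ hcard]
  simpa using card_nsmul_le_sum univ (fun i => ‖q - x i‖ + ‖x i - y‖) _
    fun i _ => norm_sub_le_norm_sub_add_norm_sub q (x i) y

end Averages

section QuantileLoss

variable {n : ℕ}

lemma one_sub_norm_mul_norm_le_quantileLoss (u x p : EuclideanSpace ℝ (Fin n)) :
    (1 - ‖u‖) * ‖p - x‖ ≤ quantileLoss u x p := by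
  have := real_inner_le_norm u (p - x)
  rw [quantileLoss]
  linarith

lemma quantileLoss_le_one_add_norm_mul_norm (u x p : EuclideanSpace ℝ (Fin n)) :
    quantileLoss u x p ≤ (1 + ‖u‖) * ‖p - x‖ := by
  have := (abs_le.mp (abs_real_inner_le_norm u (p - x))).1
  rw [quantileLoss]
  linarith

lemma sum_norm_sub_le_of_sum_quantileLoss_le {ι : Type*} [Fintype ι]
    {u : EuclideanSpace ℝ (Fin n)} (hu : ‖u‖ < 1) {x : ι → EuclideanSpace ℝ (Fin n)}
    {q y : EuclideanSpace ℝ (Fin n)}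
    (h : ∑ i, quantileLoss u (x i) q ≤ ∑ i, quantileLoss u (x i) y) :
    ∑ i, ‖q - x i‖ ≤ (1 + ‖u‖) / (1 - ‖u‖) * ∑ i, ‖x i - y‖ := by
  rw [div_mul_eq_mul_div, le_div_iff₀ (sub_pos.mpr hu), mul_comm _ (1 - ‖u‖), mul_sum, mul_sum]
  calc ∑ i, (1 - ‖u‖) * ‖q - x i‖ ≤ ∑ i, quantileLoss u (x i) q :=
        sum_le_sum fun i _ => one_sub_norm_mul_norm_le_quantileLoss u (x i) q
    _ ≤ ∑ i, quantileLoss u (x i) y := h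
    _ ≤ ∑ i, (1 + ‖u‖) * ‖x i - y‖ := sum_le_sum fun i _ => by
        rw [norm_sub_rev]; exact quantileLoss_le_one_add_norm_mul_norm u (x i) y

end QuantileLoss

/-- Euclidean case of the sample-quantile localization bound from the proof of
Theorem 5.2: every sample `u`-quantile `q` satisfies
`‖q − y‖ ≤ ((1 + β)/(1 − β)) · (1/N) ∑ᵢ ‖xᵢ − y‖ + maxᵢ ‖xᵢ − y‖` with `β = ‖u‖`. -/
theorem sample_quantile_localization
    {n : ℕ} (N : ℕ) [NeZero N]
    (x : Fin N → EuclideanSpace ℝ (Fin n))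
    (u : EuclideanSpace ℝ (Fin n)) (hu : ‖u‖ < 1)
    (y : EuclideanSpace ℝ (Fin n))
    (q : EuclideanSpace ℝ (Fin n))
    (hq : ∀ p : EuclideanSpace ℝ (Fin n),
      (N : ℝ)⁻¹ * ∑ i, quantileLoss u (x i) q ≤ (N : ℝ)⁻¹ * ∑ i, quantileLoss u (x i) p) :
    ‖q - y‖ ≤ ((1 + ‖u‖) / (1 - ‖u‖)) * ((N : ℝ)⁻¹ * ∑ i, ‖x i - y‖)
      + ⨆ i, ‖x i - y‖ := by
  have hN : (0 : ℝ) < (N : ℝ)⁻¹ := inv_pos.mpr (by exact_mod_cast Nat.pos_of_neZero N)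
  have hsum : ∑ i, quantileLoss u (x i) q ≤ ∑ i, quantileLoss u (x i) y :=
    le_of_mul_le_mul_left (hq y) hN
  have hdist := norm_sub_le_inv_card_mul_sum_add x q y
  have havg := inv_card_mul_sum_le_ciSup fun i => ‖x i - y‖
  rw [Fintype.card_fin] at hdist havg
  calc ‖q - y‖ ≤ (N : ℝ)⁻¹ * ∑ i, ‖q - x i‖ + (N : ℝ)⁻¹ * ∑ i, ‖x i - y‖ := hdist
    _ ≤ (1 + ‖u‖) / (1 - ‖u‖) * ((N : ℝ)⁻¹ * ∑ i, ‖x i - y‖) + ⨆ i, ‖x i - y‖ := by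
      rw [mul_left_comm]
      gcongr
      exact sum_norm_sub_le_of_sum_quantileLoss_le hu hsum
end
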